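/- Let p be a prime with p ≡ 1 (mod 4) and let q be a prime with q ≡ 3 (mod 4) such that q is not a quadratic residue modulo p. Then the quaternion algebra ℍ[ℚₚ, −q, −p] over ℚₚ is a division algebra: every nonzero element is a unit. (That is, the quaternion ℚ-algebra Q(−q, −p | ℚ) is ramified at p.) -/

import Mathlib

/-!
Since `p ≡ 1 (mod 4)`, `-1` is a square mod `p`, so `-q` is not, and the binary form `t² + q x²`
has no nontrivial zero mod `p`. Scaling by the coordinate of largest norm then shows that
`‖t² + q x²‖ = max(‖t‖, ‖x‖)²` on `ℚ_p`: its value is an even power of `p`. The reduced norm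
`t² + q x² + p (y² + q z²)` of `ℍ[ℚ_p, -q, -p]` is therefore anisotropic, since the two summands
have norms of different parity. A quaternion of nonzero reduced norm is a unit.
-/

open Quaternion

theorem not_isSquare_neg_of_isSquare_neg_one {R : Type*} [CommMonoid R] [HasDistribNeg R]
    {a : R} (h : IsSquare (-1 : R)) (ha : ¬IsSquare a) : ¬IsSquare (-a) :=
  fun hneg ↦ ha (by simpa using h.mul hneg)

theorem eq_zero_of_sq_add_mul_sq_eq_zero {F : Type*} [Field F] {c a b : F}
    (hc : ¬IsSquare (-c)) (h : a ^ 2 + c * b ^ 2 = 0) : a = 0 ∧ b = 0 := by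
  have hb : b = 0 := by
    by_contra hb
    exact hc ⟨a / b, by field_simp; linear_combination -h⟩
  subst hb
  simpa using h

namespace PadicInt

variable {p : ℕ} [Fact p.Prime]

theorem isUnit_iff_toZMod_ne_zero {z : ℤ_[p]} : IsUnit z ↔ toZMod z ≠ 0 := by
  rw [ne_eq, ← RingHom.mem_ker, ker_toZMod, IsLocalRing.mem_maximalIdeal, mem_nonunits_iff,
    not_not]

theorem isUnit_sq_add_mul_sq {c a b : ℤ_[p]} (hc : ¬IsSquare (-toZMod c))
    (hab : IsUnit a ∨ IsUnit b) : IsUnit (a ^ 2 + c * b ^ 2) := by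
  simp only [isUnit_iff_toZMod_ne_zero] at hab ⊢
  intro h
  rw [map_add, map_mul, map_pow, map_pow] at h
  have := eq_zero_of_sq_add_mul_sq_eq_zero hc h
  tauto

end PadicInt

namespace Padic

variable {p : ℕ} [Fact p.Prime]

theorem norm_sq_add_mul_sq_of_norm_le {c : ℤ_[p]} (hc : ¬IsSquare (-PadicInt.toZMod c))
    {t x w : ℚ_[p]} (hw : w ≠ 0) (ht : ‖t‖ ≤ ‖w‖) (hx : ‖x‖ ≤ ‖w‖)
    (hmax : ‖t‖ = ‖w‖ ∨ ‖x‖ = ‖w‖) : ‖t ^ 2 + c * x ^ 2‖ = ‖w‖ ^ 2 := by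
  have hw' : 0 < ‖w‖ := norm_pos_iff.mpr hw
  let a : ℤ_[p] := ⟨t / w, by rwa [norm_div, div_le_one hw']⟩
  let b : ℤ_[p] := ⟨x / w, by rwa [norm_div, div_le_one hw']⟩
  have hab : IsUnit a ∨ IsUnit b := by
    rw [PadicInt.isUnit_iff, PadicInt.isUnit_iff]
    change ‖t / w‖ = 1 ∨ ‖x / w‖ = 1
    rwa [norm_div, norm_div, div_eq_one_iff_eq hw'.ne', div_eq_one_iff_eq hw'.ne']
  have hscale : t ^ 2 + c * x ^ 2 = w ^ 2 * ((a ^ 2 + c * b ^ 2 : ℤ_[p]) : ℚ_[p]) := by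
    have ha : (a : ℚ_[p]) = t / w := rfl
    have hb : (b : ℚ_[p]) = x / w := rfl
    push_cast [ha, hb]
    field_simp
  rw [hscale, norm_mul, norm_pow, ← PadicInt.norm_def,
    PadicInt.isUnit_iff.mp (PadicInt.isUnit_sq_add_mul_sq hc hab), mul_one]

theorem norm_sq_add_mul_sq {c : ℤ_[p]} (hc : ¬IsSquare (-PadicInt.toZMod c)) (t x : ℚ_[p]) :
    ‖t ^ 2 + c * x ^ 2‖ = max ‖t‖ ‖x‖ ^ 2 := by
  rcases le_total ‖x‖ ‖t‖ with hle | hle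
  · rw [max_eq_left hle]
    rcases eq_or_ne t 0 with rfl | ht
    · simp [norm_le_zero_iff.mp (by simpa using hle)]
    · exact norm_sq_add_mul_sq_of_norm_le hc ht le_rfl hle (Or.inl rfl)
  · rw [max_eq_right hle]
    rcases eq_or_ne x 0 with rfl | hx
    · simp [norm_le_zero_iff.mp (by simpa using hle)]
    · exact norm_sq_add_mul_sq_of_norm_le hc hx hle le_rfl (Or.inr rfl)

theorem norm_sq_ne_norm_p_mul_norm_sq (u : ℚ_[p]) {v : ℚ_[p]} (hv : v ≠ 0) :
    ‖u‖ ^ 2 ≠ ‖(p : ℚ_[p])‖ * ‖v‖ ^ 2 := by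
  intro h
  have hu : u ≠ 0 := by
    rintro rfl
    simp [hv, (Fact.out : p.Prime).ne_zero] at h
  have hp : (1 : ℝ) < p := mod_cast (Fact.out : p.Prime).one_lt
  rw [norm_eq_zpow_neg_valuation hu, norm_eq_zpow_neg_valuation hv, norm_p, ← zpow_neg_one,
    ← zpow_natCast, ← zpow_natCast, ← zpow_mul, ← zpow_mul, ← zpow_add₀ (by positivity)] at h
  have := zpow_right_injective₀ (by positivity) hp.ne' h
  omega

theorem eq_zero_of_sq_add_mul_sq_add_p_mul_eq_zero {c : ℤ_[p]}
    (hc : ¬IsSquare (-PadicInt.toZMod c)) {t x y z : ℚ_[p]}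
    (h : t ^ 2 + c * x ^ 2 + p * (y ^ 2 + c * z ^ 2) = 0) : t = 0 ∧ x = 0 ∧ y = 0 ∧ z = 0 := by
  have hnorm : max ‖t‖ ‖x‖ ^ 2 = ‖(p : ℚ_[p])‖ * max ‖y‖ ‖z‖ ^ 2 := by
    rw [← norm_sq_add_mul_sq hc, ← norm_sq_add_mul_sq hc, ← norm_mul, eq_neg_of_add_eq_zero_left h,
      norm_neg]
  obtain ⟨u, hu⟩ : ∃ u : ℚ_[p], max ‖t‖ ‖x‖ = ‖u‖ :=
    (max_choice ‖t‖ ‖x‖).elim (⟨t, ·⟩) (⟨x, ·⟩)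
  obtain ⟨v, hv⟩ : ∃ v : ℚ_[p], max ‖y‖ ‖z‖ = ‖v‖ :=
    (max_choice ‖y‖ ‖z‖).elim (⟨y, ·⟩) (⟨z, ·⟩)
  have hyz : max ‖y‖ ‖z‖ = 0 := by
    by_contra hne
    rw [hv, norm_eq_zero] at hne
    exact norm_sq_ne_norm_p_mul_norm_sq u hne (hu ▸ hv ▸ hnorm)
  have htx : max ‖t‖ ‖x‖ = 0 := by simpa [hyz] using hnorm
  obtain ⟨ht, hx⟩ := max_le_iff.mp htx.le
  obtain ⟨hy, hz⟩ := max_le_iff.mp hyz.le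
  exact ⟨norm_le_zero_iff.mp ht, norm_le_zero_iff.mp hx, norm_le_zero_iff.mp hy,
    norm_le_zero_iff.mp hz⟩

end Padic

namespace QuaternionAlgebra

variable {R : Type*} [CommRing R] {c₁ c₂ c₃ : R}

theorem isUnit_of_isUnit_re_mul_star {x : ℍ[R,c₁,c₂,c₃]} (h : IsUnit (x * star x).re) :
    IsUnit x := by
  have hunit : IsUnit (x * star x) := by
    rw [mul_star_eq_coe]
    exact h.map (algebraMap R ℍ[R,c₁,c₂,c₃])
  exact ((star_comm_self (x := x)).symm.isUnit_mul_iff.mp hunit).1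

theorem re_mul_star (x : ℍ[R,c₁,0,c₃]) :
    (x * star x).re = x.re ^ 2 - c₁ * x.imI ^ 2 - c₃ * x.imJ ^ 2 + c₁ * c₃ * x.imK ^ 2 := by
  simp only [re_mul, re_star, imI_star, imJ_star, imK_star]
  ring

end QuaternionAlgebra

theorem quaternionAlgebra_padic_neg_q_neg_p_isDivision_general (p q : ℕ) [Fact p.Prime]
    (hp1 : p % 4 = 1) (hqr : ¬ IsSquare (q : ZMod p)) :
    ∀ x : ℍ[ℚ_[p], -(q : ℚ_[p]), -(p : ℚ_[p])], x ≠ 0 → IsUnit x := by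
  intro x hx
  have hc : ¬IsSquare (-PadicInt.toZMod (q : ℤ_[p])) := by
    rw [map_natCast]
    exact not_isSquare_neg_of_isSquare_neg_one (ZMod.exists_sq_eq_neg_one_iff.mpr (by omega)) hqr
  refine QuaternionAlgebra.isUnit_of_isUnit_re_mul_star (isUnit_iff_ne_zero.mpr fun h ↦ hx ?_)
  rw [QuaternionAlgebra.re_mul_star] at h
  obtain ⟨hre, himI, himJ, himK⟩ :=
    Padic.eq_zero_of_sq_add_mul_sq_add_p_mul_eq_zero hc (t := x.re) (x := x.imI) (y := x.imJ)
      (z := x.imK) (by push_cast; linear_combination h)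
  exact QuaternionAlgebra.ext hre himI himJ himK

/-- Let `p ≡ 1 (mod 4)` and `q ≡ 3 (mod 4)` be primes such that `q` is not a quadratic
residue mod `p`. Then `ℍ[ℚₚ, −q, −p]` is a division algebra. -/
theorem quaternionAlgebra_padic_neg_q_neg_p_isDivision (p q : ℕ) [Fact p.Prime]
    (hq : q.Prime) (hp1 : p % 4 = 1) (hq3 : q % 4 = 3)
    (hqr : ¬ IsSquare (q : ZMod p)) :
    ∀ x : ℍ[ℚ_[p], -(q : ℚ_[p]), -(p : ℚ_[p])], x ≠ 0 → IsUnit x :=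
  quaternionAlgebra_padic_neg_q_neg_p_isDivision_general p q hp1 hqr
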